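/- On ℝ^6, let F_1 = I_1 + I_2 + 2I_3, F_2 = C_0 + 2C_2, and F_3 = 2C_0² + I_1 M_3². Then {F_1, F_2} = {F_1, F_3} = {F_2, F_3} = 0, and the three functions (F_1, F_2, F_3) are functionally independent; hence (F_1, F_2, F_3) is an integrable set, with deg F_2 = 3 and deg F_3 = 6, for the resonance l = (1,1,2). -/

import Mathlib

noncomputable section

open Complex

/-- Phase space `ℝ^{2n}`: a point is a pair `(x, p)` of vectors in `ℝ^n`. -/
abbrev Phase (n : ℕ) : Type := (Fin n → ℝ) × (Fin n → ℝ)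

/-- Poisson bracket of complex-valued functions on phase space:
`{f,g} = ∑ j (∂f/∂p_j ∂g/∂x_j − ∂f/∂x_j ∂g/∂p_j)`. -/
def pb {n : ℕ} (f g : Phase n → ℂ) : Phase n → ℂ := fun w =>
  ∑ j : Fin n,
    (fderiv ℝ f w ((0 : Fin n → ℝ), Pi.single j (1 : ℝ)) *
        fderiv ℝ g w (Pi.single j (1 : ℝ), (0 : Fin n → ℝ)) -
      fderiv ℝ f w (Pi.single j (1 : ℝ), (0 : Fin n → ℝ)) *
        fderiv ℝ g w ((0 : Fin n → ℝ), Pi.single j (1 : ℝ)))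

/-- Poisson bracket of real-valued functions on phase space. -/
def pbR {n : ℕ} (f g : Phase n → ℝ) : Phase n → ℝ := fun w =>
  ∑ j : Fin n,
    (fderiv ℝ f w ((0 : Fin n → ℝ), Pi.single j (1 : ℝ)) *
        fderiv ℝ g w (Pi.single j (1 : ℝ), (0 : Fin n → ℝ)) -
      fderiv ℝ f w (Pi.single j (1 : ℝ), (0 : Fin n → ℝ)) *
        fderiv ℝ g w ((0 : Fin n → ℝ), Pi.single j (1 : ℝ)))

/-- `z_j = (x_j + i p_j)/√2`. -/
def zf {n : ℕ} (j : Fin n) (w : Phase n) : ℂ :=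
  ((w.1 j : ℂ) + Complex.I * (w.2 j : ℂ)) / ((Real.sqrt 2 : ℝ) : ℂ)

/-- `z̄_j = (x_j − i p_j)/√2`. -/
def zbf {n : ℕ} (j : Fin n) (w : Phase n) : ℂ :=
  ((w.1 j : ℂ) - Complex.I * (w.2 j : ℂ)) / ((Real.sqrt 2 : ℝ) : ℂ)

/-- `I_j = z_j z̄_j` (complex-valued; its values are real). -/
def Iact {n : ℕ} (j : Fin n) (w : Phase n) : ℂ := zf j w * zbf j w

/-- `I_j = (x_j² + p_j²)/2` (real-valued). -/
def IR {n : ℕ} (j : Fin n) (w : Phase n) : ℝ := (w.1 j ^ 2 + w.2 j ^ 2) / 2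

/-- A family of real functions on phase space is functionally independent if their
differentials are linearly independent at every point of some dense open set. -/
def FunctionallyIndependent {n : ℕ} {ι : Type*} (f : ι → Phase n → ℝ) : Prop :=
  ∃ U : Set (Phase n), IsOpen U ∧ Dense U ∧
    ∀ w ∈ U, LinearIndependent ℝ (fun i => fderiv ℝ (f i) w)

/-- The monomial `P_{a,b} = ∏_j z_j^{a_j} z̄_j^{b_j}`. -/
def Pab {n : ℕ} (a b : Fin n → ℕ) (w : Phase n) : ℂ :=
  ∏ j : Fin n, zf j w ^ a j * zbf j w ^ b j

/-- `R_m = ∏_j ζ_j^{m_j}`, with `ζ_j^{m_j} = z_j^{m_j}` for `m_j ≥ 0` and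
`ζ_j^{m_j} = z̄_j^{−m_j}` for `m_j < 0`. -/
def Rm {n : ℕ} (m : Fin n → ℤ) (w : Phase n) : ℂ :=
  ∏ j : Fin n, if 0 ≤ m j then zf j w ^ (m j).toNat else zbf j w ^ (-(m j)).toNat

/-- `w_i = z_i` if `ε_i = 1`, `w_i = z̄_i` if `ε_i = −1`. -/
def wfun {n : ℕ} (ε : Fin n → ℤ) (i : Fin n) (w : Phase n) : ℂ :=
  if ε i = 1 then zf i w else zbf i w

/-- `w̄_i`, the complex conjugate of `w_i`. -/
def wbfun {n : ℕ} (ε : Fin n → ℤ) (i : Fin n) (w : Phase n) : ℂ :=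
  if ε i = 1 then zbf i w else zf i w

/-- `P_{ij} = i(w_i w̄_j − w_j w̄_i)` (complex-valued; its values are real). -/
def Pf {n : ℕ} (ε : Fin n → ℤ) (i j : Fin n) (w : Phase n) : ℂ :=
  Complex.I * (wfun ε i w * wbfun ε j w - wfun ε j w * wbfun ε i w)

/-- `P_{ij}` as a real-valued function. -/
def PfR {n : ℕ} (ε : Fin n → ℤ) (i j : Fin n) (w : Phase n) : ℝ :=
  (Pf ε i j w).re


/-- `C₀ = Im(z̄₁² z₃)`. -/
def C0 (w : Phase 3) : ℝ := (zbf 0 w ^ 2 * zf 2 w).im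

/-- `C₂ = Im(z̄₂² z₃)`. -/
def C2 (w : Phase 3) : ℝ := (zbf 1 w ^ 2 * zf 2 w).im

/-- `M₃ = 2 Im(z̄₁ z₂)`. -/
def M3 (w : Phase 3) : ℝ := 2 * (zbf 0 w * zf 1 w).im

/-!
The three functions are polynomials in `(x, p)`, so brackets, degrees and Jacobians can be
computed in `MvPolynomial`. The brackets vanish by direct expansion, the degrees follow from
homogeneity, and the differentials are independent off the zero set of a Jacobian minor. That
minor is a polynomial which is nonzero at one point, so by the identity theorem for analytic
functions its nonvanishing set is dense (and open).
-/

open MvPolynomial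

theorem MvPolynomial.hasFDerivAt_eval {𝕜 σ : Type*} [NontriviallyNormedField 𝕜] [Fintype σ]
    (p : MvPolynomial σ 𝕜) (v : σ → 𝕜) :
    HasFDerivAt (fun v => eval v p)
      (∑ i, eval v (pderiv i p) • (ContinuousLinearMap.proj i : (σ → 𝕜) →L[𝕜] 𝕜)) v := by
  classical
  induction p using MvPolynomial.induction_on with
  | C c =>
    simp only [eval_C]
    refine (hasFDerivAt_const (𝕜 := 𝕜) c v).congr_fderiv ?_
    ext u
    simp
  | add p q hp hq =>
    simp only [map_add]
    refine (hp.add hq).congr_fderiv ?_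
    ext u
    simp [Finset.sum_add_distrib, add_mul]
  | mul_X p i hp =>
    simp only [map_mul, eval_X]
    refine (hp.mul (hasFDerivAt_apply i v)).congr_fderiv ?_
    ext u
    simp [Finset.sum_add_distrib, add_mul, Finset.mul_sum, pderiv_X, Pi.single_apply, mul_assoc,
      apply_ite (eval v)]

theorem linearIndependent_of_det_apply_ne_zero {𝕜 E ι : Type*} [NontriviallyNormedField 𝕜]
    [NormedAddCommGroup E] [NormedSpace 𝕜 E] [Fintype ι] [DecidableEq ι]
    (L : ι → E →L[𝕜] 𝕜) (v : ι → E) (h : (Matrix.of fun i k => L i (v k)).det ≠ 0) :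
    LinearIndependent 𝕜 L :=
  .of_comp (LinearMap.pi fun k => (ContinuousLinearMap.apply 𝕜 𝕜 (v k)).toLinearMap)
    (by exact Matrix.linearIndependent_rows_of_det_ne_zero h)

theorem AnalyticOnNhd.dense_setOf_ne_zero {𝕜 E F : Type*} [NontriviallyNormedField 𝕜]
    [NormedAddCommGroup E] [NormedSpace 𝕜 E] [PreconnectedSpace E]
    [NormedAddCommGroup F] [NormedSpace 𝕜 F] {f : E → F} (hf : AnalyticOnNhd 𝕜 f Set.univ)
    {z₀ : E} (hz₀ : f z₀ ≠ 0) : Dense {x | f x ≠ 0} := by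
  refine dense_iff_inter_open.2 fun V hV ⟨z, hz⟩ => ?_
  by_contra hempty
  have hzero : f =ᶠ[nhds z] 0 := Filter.eventuallyEq_of_mem (hV.mem_nhds hz) fun x hx =>
    not_not.1 fun hne => hempty ⟨x, hx, hne⟩
  exact hz₀ (congrFun (hf.eq_of_eventuallyEq analyticOnNhd_const hzero) z₀)

section PhaseSpacePolynomials

variable {n : ℕ}

def phaseCoords : Phase n ≃L[ℝ] (Fin n ⊕ Fin n → ℝ) :=
  (ContinuousLinearEquiv.sumPiEquivProdPi ℝ (Fin n) (Fin n) fun _ => ℝ).symm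

theorem phaseCoords_apply (w : Phase n) : phaseCoords w = Sum.elim w.1 w.2 := by
  ext (j | j) <;> rfl

def phasePoly (Q : MvPolynomial (Fin n ⊕ Fin n) ℝ) : Phase n → ℝ :=
  fun w => eval (Sum.elim w.1 w.2) Q

theorem fderiv_phasePoly_apply (Q : MvPolynomial (Fin n ⊕ Fin n) ℝ) (w d : Phase n) :
    fderiv ℝ (phasePoly Q) w d = ∑ s, phasePoly (pderiv s Q) w * phaseCoords d s := by
  have hQ : phasePoly Q = (fun v => eval v Q) ∘ phaseCoords := by
    funext w
    simp [phasePoly, phaseCoords_apply]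
  rw [hQ, ((hasFDerivAt_eval Q _).comp w phaseCoords.hasFDerivAt).fderiv]
  simp [phasePoly, phaseCoords_apply]

theorem fderiv_phasePoly_apply_symm_single (Q : MvPolynomial (Fin n ⊕ Fin n) ℝ) (w : Phase n)
    (s : Fin n ⊕ Fin n) :
    fderiv ℝ (phasePoly Q) w (phaseCoords.symm (Pi.single s 1)) = phasePoly (pderiv s Q) w := by
  simp [fderiv_phasePoly_apply, Pi.single_apply]

theorem fderiv_phasePoly_apply_inl (Q : MvPolynomial (Fin n ⊕ Fin n) ℝ) (w : Phase n)
    (j : Fin n) : fderiv ℝ (phasePoly Q) w (Pi.single j 1, 0) = phasePoly (pderiv (.inl j) Q) w := by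
  simp [fderiv_phasePoly_apply, phaseCoords_apply, Pi.single_apply]

theorem fderiv_phasePoly_apply_inr (Q : MvPolynomial (Fin n ⊕ Fin n) ℝ) (w : Phase n)
    (j : Fin n) : fderiv ℝ (phasePoly Q) w (0, Pi.single j 1) = phasePoly (pderiv (.inr j) Q) w := by
  simp [fderiv_phasePoly_apply, phaseCoords_apply, Pi.single_apply]

def poissonBracket (P Q : MvPolynomial (Fin n ⊕ Fin n) ℝ) : MvPolynomial (Fin n ⊕ Fin n) ℝ :=
  ∑ j, (pderiv (.inr j) P * pderiv (.inl j) Q - pderiv (.inl j) P * pderiv (.inr j) Q)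

theorem pbR_phasePoly (P Q : MvPolynomial (Fin n ⊕ Fin n) ℝ) :
    pbR (phasePoly P) (phasePoly Q) = phasePoly (poissonBracket P Q) := by
  funext w
  simp [pbR, fderiv_phasePoly_apply_inl, fderiv_phasePoly_apply_inr, poissonBracket, phasePoly]

theorem analyticOnNhd_phasePoly (Q : MvPolynomial (Fin n ⊕ Fin n) ℝ) :
    AnalyticOnNhd ℝ (phasePoly Q) Set.univ := by
  have h := AnalyticOnNhd.eval_continuousLinearMap (phaseCoords (n := n) : Phase n →L[ℝ] _) Q
  simp only [ContinuousLinearEquiv.coe_coe, phaseCoords_apply] at h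
  exact h

theorem functionallyIndependent_phasePoly {m : ℕ} (Q : Fin m → MvPolynomial (Fin n ⊕ Fin n) ℝ)
    (s : Fin m → Fin n ⊕ Fin n) {w₀ : Phase n}
    (h : phasePoly (Matrix.of fun i k => pderiv (s k) (Q i)).det w₀ ≠ 0) :
    FunctionallyIndependent fun i => phasePoly (Q i) := by
  have hD := analyticOnNhd_phasePoly (Matrix.of fun i k => pderiv (s k) (Q i)).det
  refine ⟨_, isOpen_ne_fun hD.continuous continuous_const, hD.dense_setOf_ne_zero h,
    fun w hw => linearIndependent_of_det_apply_ne_zero _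
      (fun k => phaseCoords.symm (Pi.single (s k) 1)) ?_⟩
  convert hw using 1
  simp only [phasePoly, RingHom.map_det, RingHom.mapMatrix_apply,
    fderiv_phasePoly_apply_symm_single]
  rfl

def xPoly (j : Fin n) : MvPolynomial (Fin n ⊕ Fin n) ℝ := X (.inl j)

def pPoly (j : Fin n) : MvPolynomial (Fin n ⊕ Fin n) ℝ := X (.inr j)

def actionPoly (j : Fin n) : MvPolynomial (Fin n ⊕ Fin n) ℝ :=
  C (1 / 2) * (xPoly j ^ 2 + pPoly j ^ 2)

def imZbarSqZPoly (i j : Fin n) : MvPolynomial (Fin n ⊕ Fin n) ℝ :=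
  C (√2 / 4) * ((xPoly i ^ 2 - pPoly i ^ 2) * pPoly j - C 2 * xPoly i * pPoly i * xPoly j)

def angularMomentumPoly (i j : Fin n) : MvPolynomial (Fin n ⊕ Fin n) ℝ :=
  xPoly i * pPoly j - pPoly i * xPoly j

theorem isHomogeneous_actionPoly (j : Fin n) : (actionPoly j).IsHomogeneous 2 :=
  (((isHomogeneous_X ℝ _).pow 2).add ((isHomogeneous_X ℝ _).pow 2)).C_mul _

theorem isHomogeneous_imZbarSqZPoly (i j : Fin n) : (imZbarSqZPoly i j).IsHomogeneous 3 :=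
  (((((isHomogeneous_X ℝ _).pow 2).sub ((isHomogeneous_X ℝ _).pow 2)).mul
    (isHomogeneous_X ℝ _)).sub
      ((((isHomogeneous_X ℝ _).C_mul 2).mul (isHomogeneous_X ℝ _)).mul
        (isHomogeneous_X ℝ _))).C_mul _

theorem isHomogeneous_angularMomentumPoly (i j : Fin n) :
    (angularMomentumPoly i j).IsHomogeneous 2 :=
  ((isHomogeneous_X ℝ _).mul (isHomogeneous_X ℝ _)).sub
    ((isHomogeneous_X ℝ _).mul (isHomogeneous_X ℝ _))

theorem zf_eq_mk (j : Fin n) (w : Phase n) : zf j w = ⟨w.1 j / √2, w.2 j / √2⟩ := by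
  apply Complex.ext <;> simp [zf, Complex.div_ofReal_re, Complex.div_ofReal_im]

theorem zbf_eq_mk (j : Fin n) (w : Phase n) : zbf j w = ⟨w.1 j / √2, -(w.2 j / √2)⟩ := by
  apply Complex.ext <;> simp [zbf, Complex.div_ofReal_re, Complex.div_ofReal_im, neg_div]

theorem eval_actionPoly (j : Fin n) (w : Phase n) :
    eval (Sum.elim w.1 w.2) (actionPoly j) = IR j w := by
  simp only [actionPoly, xPoly, pPoly, map_mul, map_add, map_pow, eval_C, eval_X, Sum.elim_inl,
    Sum.elim_inr, IR]
  ring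

theorem eval_imZbarSqZPoly (i j : Fin n) (w : Phase n) :
    eval (Sum.elim w.1 w.2) (imZbarSqZPoly i j) = (zbf i w ^ 2 * zf j w).im := by
  have h2 : √2 ^ 2 = 2 := Real.sq_sqrt zero_le_two
  simp only [imZbarSqZPoly, xPoly, pPoly, map_mul, map_sub, eval_C, eval_X, Sum.elim_inl,
    Sum.elim_inr, zbf_eq_mk, zf_eq_mk, pow_two, Complex.mul_im, Complex.mul_re]
  field_simp
  rw [show √2 ^ 4 = (√2 ^ 2) ^ 2 by ring, h2]
  ring

theorem eval_angularMomentumPoly (i j : Fin n) (w : Phase n) :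
    eval (Sum.elim w.1 w.2) (angularMomentumPoly i j) = 2 * (zbf i w * zf j w).im := by
  simp only [angularMomentumPoly, xPoly, pPoly, map_sub, map_mul, eval_X, Sum.elim_inl,
    Sum.elim_inr, zbf_eq_mk, zf_eq_mk, Complex.mul_im]
  field_simp
  rw [Real.sq_sqrt zero_le_two]
  ring

end PhaseSpacePolynomials

def F1Poly : MvPolynomial (Fin 3 ⊕ Fin 3) ℝ := actionPoly 0 + actionPoly 1 + C 2 * actionPoly 2

def F2Poly : MvPolynomial (Fin 3 ⊕ Fin 3) ℝ := imZbarSqZPoly 0 2 + C 2 * imZbarSqZPoly 1 2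

def F3Poly : MvPolynomial (Fin 3 ⊕ Fin 3) ℝ :=
  C 2 * imZbarSqZPoly 0 2 ^ 2 + actionPoly 0 * angularMomentumPoly 0 1 ^ 2

theorem phasePoly_F1Poly : phasePoly F1Poly = fun w => IR 0 w + IR 1 w + 2 * IR 2 w := by
  funext w
  simp [phasePoly, F1Poly, eval_actionPoly]

theorem phasePoly_F2Poly : phasePoly F2Poly = fun w => C0 w + 2 * C2 w := by
  funext w
  simp [phasePoly, F2Poly, eval_imZbarSqZPoly, C0, C2]

theorem phasePoly_F3Poly : phasePoly F3Poly = fun w => 2 * C0 w ^ 2 + IR 0 w * M3 w ^ 2 := by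
  funext w
  simp [phasePoly, F3Poly, eval_imZbarSqZPoly, eval_actionPoly, eval_angularMomentumPoly, C0, M3]

theorem phasePoly_poissonBracket_FPoly_eq_zero :
    phasePoly (poissonBracket F1Poly F2Poly) = 0 ∧ phasePoly (poissonBracket F1Poly F3Poly) = 0 ∧
      phasePoly (poissonBracket F2Poly F3Poly) = 0 := by
  have h3 : √2 ^ 3 = 2 * √2 := by rw [pow_succ, Real.sq_sqrt zero_le_two]
  refine ⟨?_, ?_, ?_⟩ <;> funext w <;>
    simp only [phasePoly, poissonBracket, F1Poly, F2Poly, F3Poly, actionPoly, imZbarSqZPoly,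
      angularMomentumPoly, xPoly, pPoly, Fin.sum_univ_three, map_add, map_sub, map_mul, map_pow,
      pderiv_mul, pderiv_pow, pderiv_C, pderiv_X, Pi.single_apply, Sum.inl.injEq, Sum.inr.injEq,
      reduceCtorEq, Fin.reduceEq, if_true, if_false, eval_C, eval_X, Sum.elim_inl, Sum.elim_inr,
      map_natCast, map_one, map_zero, Pi.zero_apply]
  · ring
  · ring
  · ring_nf
    rw [h3]
    ring

theorem totalDegree_F2Poly : F2Poly.totalDegree = 3 := by
  refine ((isHomogeneous_imZbarSqZPoly 0 2).add
    ((isHomogeneous_imZbarSqZPoly 1 2).C_mul 2)).totalDegree fun h => ?_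
  simpa [imZbarSqZPoly, xPoly, pPoly] using congrArg (eval (Sum.elim ![1, 0, 0] ![0, 0, 1])) h

theorem totalDegree_F3Poly : F3Poly.totalDegree = 6 := by
  refine ((((isHomogeneous_imZbarSqZPoly 0 2).pow 2).C_mul 2).add ((isHomogeneous_actionPoly 0).mul
    ((isHomogeneous_angularMomentumPoly 0 1).pow 2))).totalDegree fun h => ?_
  simpa [imZbarSqZPoly, actionPoly, angularMomentumPoly, xPoly, pPoly] using
    congrArg (eval (Sum.elim ![1, 0, 0] ![0, 0, 1])) h

-- The minor equals `23 √2 / 4`.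
theorem jacobianMinor_ne_zero :
    phasePoly (Matrix.of fun i k =>
      pderiv (![.inl 0, .inr 1, .inr 2] k) (![F1Poly, F2Poly, F3Poly] i)).det
      (![1, 0, 0], ![0, 1, 1]) ≠ 0 := by
  have h3 : √2 ^ 3 = 2 * √2 := by rw [pow_succ, Real.sq_sqrt zero_le_two]
  simp only [phasePoly, Matrix.det_fin_three, Matrix.of_apply, Matrix.cons_val_zero,
    Matrix.cons_val_one, Matrix.cons_val, F1Poly, F2Poly, F3Poly, actionPoly, imZbarSqZPoly,
    angularMomentumPoly, xPoly, pPoly, map_add, map_sub, map_mul, map_pow,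
    pderiv_mul, pderiv_pow, pderiv_C, pderiv_X, Pi.single_apply, Sum.inl.injEq, Sum.inr.injEq,
    reduceCtorEq, Fin.reduceEq, if_true, if_false, eval_C, eval_X, Sum.elim_inl, Sum.elim_inr,
    map_natCast, map_one, map_zero]
  ring_nf
  rw [h3]
  ring_nf
  positivity

/-- section 4.2: `F₁ = I₁ + I₂ + 2I₃`, `F₂ = C₀ + 2C₂`,
`F₃ = 2C₀² + I₁M₃²` pairwise Poisson-commute and are functionally independent, so they
form a (non-simple) integrable set with `deg F₂ = 3`, `deg F₃ = 6` for `l = (1,1,2)`. -/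
theorem statement18 (F1 F2 F3 : Phase 3 → ℝ)
    (hF1 : F1 = fun w => IR 0 w + IR 1 w + 2 * IR 2 w)
    (hF2 : F2 = fun w => C0 w + 2 * C2 w)
    (hF3 : F3 = fun w => 2 * C0 w ^ 2 + IR 0 w * M3 w ^ 2) :
    pbR F1 F2 = 0 ∧ pbR F1 F3 = 0 ∧ pbR F2 F3 = 0 ∧
    FunctionallyIndependent ![F1, F2, F3] ∧
    (∃ Q : MvPolynomial (Fin 3 ⊕ Fin 3) ℝ, Q.totalDegree = 3 ∧
      F2 = fun w => MvPolynomial.eval (Sum.elim w.1 w.2) Q) ∧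
    (∃ Q : MvPolynomial (Fin 3 ⊕ Fin 3) ℝ, Q.totalDegree = 6 ∧
      F3 = fun w => MvPolynomial.eval (Sum.elim w.1 w.2) Q) := by
  obtain rfl : F1 = phasePoly F1Poly := hF1.trans phasePoly_F1Poly.symm
  obtain rfl : F2 = phasePoly F2Poly := hF2.trans phasePoly_F2Poly.symm
  obtain rfl : F3 = phasePoly F3Poly := hF3.trans phasePoly_F3Poly.symm
  have hindep := functionallyIndependent_phasePoly _ _ jacobianMinor_ne_zero
  refine ⟨?_, ?_, ?_, ?_, ⟨F2Poly, totalDegree_F2Poly, rfl⟩, ⟨F3Poly, totalDegree_F3Poly, rfl⟩⟩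
  · rw [pbR_phasePoly, phasePoly_poissonBracket_FPoly_eq_zero.1]
  · rw [pbR_phasePoly, phasePoly_poissonBracket_FPoly_eq_zero.2.1]
  · rw [pbR_phasePoly, phasePoly_poissonBracket_FPoly_eq_zero.2.2]
  · convert hindep using 1
    ext i : 1
    fin_cases i <;> rfl

end
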